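/- Let f₁(x) = ⟨a₁,x⟩ + b₁ and f₂(x) = ⟨a₂,x⟩ + b₂ be affine eigenfunctions of -L with the same eigenvalue λ₁ = ρ > 0 (L = Δ - ∇V·∇, μ = e^{-V} probability measure), orthogonal in L²(μ). Then ⟨a₁, a₂⟩ = 0. -/

import Mathlib

noncomputable section
open MeasureTheory Real

/-- Laplacian on Euclidean space via second partial derivatives. -/
def elap {d : ℕ} (f : EuclideanSpace ℝ (Fin d) → ℝ) (x : EuclideanSpace ℝ (Fin d)) : ℝ :=
  ∑ i, fderiv ℝ (fun y => fderiv ℝ f y (EuclideanSpace.single i 1)) x (EuclideanSpace.single i 1)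

/-- Langevin generator L = Δ - ∇V·∇. -/
def Lgen {d : ℕ} (V f : EuclideanSpace ℝ (Fin d) → ℝ) (x : EuclideanSpace ℝ (Fin d)) : ℝ :=
  elap f x - inner ℝ (gradient V x) (gradient f x)

/-- Hessian of f at x, as a bilinear form evaluated at (u, v). -/
def hessian {d : ℕ} (f : EuclideanSpace ℝ (Fin d) → ℝ) (x u v : EuclideanSpace ℝ (Fin d)) : ℝ :=
  fderiv ℝ (fun y => fderiv ℝ f y v) x u

/-- Boltzmann–Gibbs measure e^{-V} dx. -/
def gibbs {d : ℕ} (V : EuclideanSpace ℝ (Fin d) → ℝ) : Measure (EuclideanSpace ℝ (Fin d)) :=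
  volume.withDensity fun x => ENNReal.ofReal (exp (-V x))

/-- The spectral gap: the best constant λ₁ in the Poincaré inequality
Var_μ(f) ≤ (1/λ₁) ∫ |∇f|² dμ over smooth f ∈ L²(μ). -/
def spectralGap {d : ℕ} (μ : Measure (EuclideanSpace ℝ (Fin d))) : ℝ :=
  sSup {c : ℝ | 0 ≤ c ∧ ∀ f : EuclideanSpace ℝ (Fin d) → ℝ, ContDiff ℝ (⊤ : ℕ∞) f → MemLp f 2 μ →
    c * (∫ x, f x ^ 2 ∂μ - (∫ x, f x ∂μ) ^ 2) ≤ ∫ x, ‖gradient f x‖ ^ 2 ∂μ}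

variable {d : ℕ}
local notation "E" => EuclideanSpace ℝ (Fin d)

lemma aff_hasFDerivAt (c : E) (β : ℝ) (x : E) :
    HasFDerivAt (fun y : E => (inner ℝ c y : ℝ) + β) (innerSL ℝ c) x :=
  (innerSL ℝ c).hasFDerivAt.add_const β

lemma aff_fderiv (c : E) (β : ℝ) (x : E) :
    fderiv ℝ (fun y : E => (inner ℝ c y : ℝ) + β) x = innerSL ℝ c :=
  (aff_hasFDerivAt c β x).fderiv

lemma aff_gradient (c : E) (β : ℝ) (x : E) :
    gradient (fun y : E => (inner ℝ c y : ℝ) + β) x = c := by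
  unfold gradient
  rw [aff_fderiv]
  have h : InnerProductSpace.toDual ℝ (EuclideanSpace ℝ (Fin d)) c = innerSL ℝ c := by
    ext y; simp
  rw [← h, LinearIsometryEquiv.symm_apply_apply]

lemma aff_elap (c : E) (β : ℝ) (x : E) :
    elap (fun y : E => (inner ℝ c y : ℝ) + β) x = 0 := by
  unfold elap
  apply Finset.sum_eq_zero
  intro i _
  have h : (fun y : E => fderiv ℝ (fun y : E => (inner ℝ c y : ℝ) + β) y (EuclideanSpace.single i 1))
      = fun _ : E => (innerSL ℝ c) (EuclideanSpace.single i 1) := by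
    funext y; rw [aff_fderiv]
  rw [h, fderiv_fun_const]
  simp

lemma inner_gradient_eq (V : E → ℝ) (y c : E) :
    (inner ℝ (gradient V y) c : ℝ) = fderiv ℝ V y c := by
  simpa [gradient] using
    (InnerProductSpace.toDual_symm_apply (𝕜 := ℝ) (x := c) (y := fderiv ℝ V y))

lemma eig_fderiv {V : E → ℝ} {ρ : ℝ} {c : E} {β : ℝ}
    (h : ∀ x, -(Lgen V (fun y => inner ℝ c y + β) x) = ρ * (inner ℝ c x + β)) (y : E) :
    fderiv ℝ V y c = ρ * ((inner ℝ c y : ℝ) + β) := by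
  have h' := h y
  unfold Lgen at h'
  rw [aff_elap, aff_gradient, inner_gradient_eq] at h'
  linarith

lemma eig_fderiv_combo {V : E → ℝ} {ρ : ℝ} {a₁ a₂ : E} {b₁ b₂ : ℝ}
    (h₁ : ∀ y, fderiv ℝ V y a₁ = ρ * ((inner ℝ a₁ y : ℝ) + b₁))
    (h₂ : ∀ y, fderiv ℝ V y a₂ = ρ * ((inner ℝ a₂ y : ℝ) + b₂))
    (s t : ℝ) (y : E) :
    fderiv ℝ V y (s • a₁ + t • a₂)
      = ρ * ((inner ℝ (s • a₁ + t • a₂) y : ℝ) + (s * b₁ + t * b₂)) := by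
  rw [map_add, _root_.map_smul, _root_.map_smul, inner_add_left, real_inner_smul_left, real_inner_smul_left]
  simp only [smul_eq_mul]
  rw [h₁ y, h₂ y]
  ring

lemma line_formula {V : E → ℝ} (hV : ContDiff ℝ (⊤ : ℕ∞) V) {ρ : ℝ} {c : E} {β : ℝ}
    (hc : ∀ y, fderiv ℝ V y c = ρ * ((inner ℝ c y : ℝ) + β)) (x : E) (u : ℝ) :
    V (x + u • c) = V x + ρ * (u * ((inner ℝ c x : ℝ) + β)) + ρ * (u ^ 2 * (‖c‖ ^ 2 / 2)) := by
  set A : ℝ := (inner ℝ c x : ℝ) + β with hA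
  set N : ℝ := ‖c‖ ^ 2 with hN
  set g : ℝ → ℝ := fun t => V (x + t • c) - (V x + ρ * (t * A) + ρ * (t ^ 2 * (N / 2))) with hg
  have hd : ∀ t : ℝ, HasDerivAt g 0 t := by
    intro t
    have h1 : HasDerivAt (fun t : ℝ => x + t • c) c t := by
      simpa using ((hasDerivAt_id t).smul_const c).const_add x
    have h2 : HasDerivAt (fun t : ℝ => V (x + t • c)) (ρ * A + ρ * t * N) t := by
      have h3 := ((hV.differentiable (by simp) (x + t • c)).hasFDerivAt).comp_hasDerivAt t h1
      refine h3.congr_deriv ?_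
      rw [hc, inner_add_right, real_inner_smul_right, real_inner_self_eq_norm_sq]
      ring
    have h4 : HasDerivAt (fun t : ℝ => V x + ρ * (t * A) + ρ * (t ^ 2 * (N / 2)))
        (ρ * A + ρ * t * N) t := by
      have ha : HasDerivAt (fun t : ℝ => t * A) A t := hasDerivAt_mul_const A
      have hb : HasDerivAt (fun t : ℝ => t ^ 2 * (N / 2)) ((2 * t ^ 1) * (N / 2)) t := by
        simpa using (hasDerivAt_pow 2 t).mul_const (N / 2)
      have := ((ha.const_mul ρ).const_add (V x)).add (hb.const_mul ρ)
      refine this.congr_deriv ?_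
      ring
    have h5 := h2.sub h4
    rw [sub_self] at h5
    exact h5
  have hconst : g u = g 0 :=
    is_const_of_deriv_eq_zero (fun t => (hd t).differentiableAt) (fun t => (hd t).deriv) u 0
  have h0 : g 0 = 0 := by simp [hg]
  have hu : g u = 0 := by rw [hconst, h0]
  simp only [hg] at hu
  linarith

lemma gibbs_integral {V : E → ℝ} (hV : Continuous V) (g : E → ℝ) :
    ∫ x, g x ∂(gibbs V) = ∫ x, exp (-V x) * g x ∂(volume) := by
  unfold gibbs
  have hm : Measurable fun x : E => (exp (-V x)).toNNReal :=
    measurable_real_toNNReal.comp (hV.neg.rexp.measurable)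
  rw [show (fun x : E => ENNReal.ofReal (exp (-V x)))
      = fun x : E => ((exp (-V x)).toNNReal : ENNReal) from rfl]
  rw [integral_withDensity_eq_integral_smul hm]
  congr 1; funext x
  simp [NNReal.smul_def, Real.coe_toNNReal _ (exp_nonneg _)]

lemma gibbs_lintegral {V : E → ℝ} (hV : Continuous V) {g : E → ENNReal} (hg : Measurable g) :
    ∫⁻ x, g x ∂(gibbs V) = ∫⁻ x, ENNReal.ofReal (exp (-V x)) * g x ∂(volume) := by
  unfold gibbs
  rw [lintegral_withDensity_eq_lintegral_mul _ (by fun_prop) hg]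
  rfl

lemma gibbs_mass {V : E → ℝ} (hV : Continuous V) [IsProbabilityMeasure (gibbs V)] :
    ∫⁻ x, ENNReal.ofReal (exp (-V x)) ∂(volume : Measure E) = 1 := by
  have h : gibbs V Set.univ = 1 := measure_univ
  rwa [gibbs, withDensity_apply _ MeasurableSet.univ, setLIntegral_univ] at h

lemma gibbs_mass_real {V : E → ℝ} (hV : Continuous V) [IsProbabilityMeasure (gibbs V)] :
    ∫ x, exp (-V x) ∂(volume : Measure E) = 1 := by
  rw [integral_eq_lintegral_of_nonneg_ae (f := fun x => exp (-V x)) (Filter.Eventually.of_forall fun x => exp_nonneg _)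
    (hV.neg.rexp.aestronglyMeasurable), gibbs_mass hV]
  simp

lemma exp_integrable {V : E → ℝ} (hV : ContDiff ℝ (⊤ : ℕ∞) V) {ρ : ℝ} (hρ : 0 < ρ)
    [IsProbabilityMeasure (gibbs V)] {c : E} {β : ℝ}
    (hc : ∀ y, fderiv ℝ V y c = ρ * ((inner ℝ c y : ℝ) + β)) :
    Integrable (fun x : E => exp ((inner ℝ c x : ℝ) + β)) (gibbs V) := by
  have hVc : Continuous V := hV.continuous
  have hcont : Continuous fun x : E => ((inner ℝ c x : ℝ) + β) :=
    (continuous_const.inner continuous_id).add continuous_const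
  set w : E := (-1 / ρ) • c with hw
  set N : ℝ := ‖c‖ ^ 2 with hN
  have hptw : ∀ x : E, ENNReal.ofReal (exp (-V x)) * ENNReal.ofReal (exp ((inner ℝ c x : ℝ) + β))
      = ENNReal.ofReal (exp (-V (x + w))) * ENNReal.ofReal (exp (N / (2 * ρ))) := by
    intro x
    rw [← ENNReal.ofReal_mul (exp_nonneg _), ← ENNReal.ofReal_mul (exp_nonneg _),
      ← exp_add, ← exp_add]
    congr 1
    rw [hw, line_formula hV hc x (-1 / ρ)]
    rw [hN]
    congr 1
    field_simp [hρ.ne']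
    ring
  have hlin : ∫⁻ x, ENNReal.ofReal (exp ((inner ℝ c x : ℝ) + β)) ∂(gibbs V)
      = ENNReal.ofReal (exp (N / (2 * ρ))) := by
    have hgm : Measurable fun x : E => ENNReal.ofReal (exp ((inner ℝ c x : ℝ) + β)) := by
      exact (ENNReal.continuous_ofReal.comp hcont.rexp).measurable
    rw [gibbs_lintegral hVc hgm]
    calc ∫⁻ x, ENNReal.ofReal (exp (-V x)) * ENNReal.ofReal (exp ((inner ℝ c x : ℝ) + β)) ∂volume
        = ∫⁻ x, ENNReal.ofReal (exp (-V (x + w))) * ENNReal.ofReal (exp (N / (2 * ρ))) ∂volume := by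
          exact lintegral_congr hptw
      _ = (∫⁻ x, ENNReal.ofReal (exp (-V (x + w))) ∂volume) * ENNReal.ofReal (exp (N / (2 * ρ))) := by
          exact lintegral_mul_const' _ _ (by simp)
      _ = (∫⁻ x, ENNReal.ofReal (exp (-V x)) ∂volume) * ENNReal.ofReal (exp (N / (2 * ρ))) := by
          rw [lintegral_add_right_eq_self (fun x => ENNReal.ofReal (exp (-V x))) w]
      _ = ENNReal.ofReal (exp (N / (2 * ρ))) := by rw [gibbs_mass hVc, one_mul]
  refine ⟨(Real.continuous_exp.comp hcont).aestronglyMeasurable, ?_⟩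
  rw [hasFiniteIntegral_iff_ofReal (Filter.Eventually.of_forall fun x => exp_nonneg _), hlin]
  exact ENNReal.ofReal_lt_top

set_option maxHeartbeats 1000000 in
/-- if f₁(x) = ⟨a₁,x⟩ + b₁ and f₂(x) = ⟨a₂,x⟩ + b₂ are affine
eigenfunctions of -L with the same eigenvalue λ₁ = ρ > 0, orthogonal in L²(μ),
then ⟨a₁, a₂⟩ = 0. -/
theorem orthogonal_eigenfunctions_orthogonal_gradients
    {d : ℕ} (V : EuclideanSpace ℝ (Fin d) → ℝ) (ρ : ℝ)
    (a₁ a₂ : EuclideanSpace ℝ (Fin d)) (b₁ b₂ : ℝ)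
    (hρ : 0 < ρ)
    (hV : ContDiff ℝ (⊤ : ℕ∞) V)
    (hprob : IsProbabilityMeasure (gibbs V))
    (heig₁ : ∀ x, -(Lgen V (fun y => inner ℝ a₁ y + b₁) x) = ρ * (inner ℝ a₁ x + b₁))
    (heig₂ : ∀ x, -(Lgen V (fun y => inner ℝ a₂ y + b₂) x) = ρ * (inner ℝ a₂ x + b₂))
    (hL2₁ : MemLp (fun x => (inner ℝ a₁ x : ℝ) + b₁) 2 (gibbs V))
    (hL2₂ : MemLp (fun x => (inner ℝ a₂ x : ℝ) + b₂) 2 (gibbs V))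
    (horth : ∫ x, ((inner ℝ a₁ x : ℝ) + b₁) * ((inner ℝ a₂ x : ℝ) + b₂) ∂(gibbs V) = 0) :
    (inner ℝ a₁ a₂ : ℝ) = 0 := by
  have hVc : Continuous V := hV.continuous
  haveI := hprob
  set γ : ℝ := (inner ℝ a₁ a₂ : ℝ) with hγ
  set B : ℝ := ‖a₂‖ ^ 2 with hB
  set μ := gibbs V with hμ
  -- abbreviations
  set f₁ : EuclideanSpace ℝ (Fin d) → ℝ := fun x => (inner ℝ a₁ x : ℝ) + b₁ with hf₁
  set f₂ : EuclideanSpace ℝ (Fin d) → ℝ := fun x => (inner ℝ a₂ x : ℝ) + b₂ with hf₂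
  have hf₁c : Continuous f₁ := (continuous_const.inner continuous_id).add continuous_const
  have hf₂c : Continuous f₂ := (continuous_const.inner continuous_id).add continuous_const
  -- eigenvalue equations as statements about fderiv of V
  have hc₁ : ∀ y, fderiv ℝ V y a₁ = ρ * (f₁ y) := eig_fderiv heig₁
  have hc₂ : ∀ y, fderiv ℝ V y a₂ = ρ * (f₂ y) := eig_fderiv heig₂
  -- the potential is quadratic along a₂
  have line₂ : ∀ (x : EuclideanSpace ℝ (Fin d)) (u : ℝ),
      V (x + u • a₂) = V x + ρ * (u * f₂ x) + ρ * (u ^ 2 * (B / 2)) :=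
    fun x u => line_formula hV hc₂ x u
  -- exponential integrability
  have Eint : ∀ p q : ℝ, Integrable (fun x => exp (p * f₁ x + q * f₂ x)) μ := by
    intro p q
    have hcc := eig_fderiv_combo hc₁ hc₂ p q
    have h := exp_integrable hV hρ hcc
    refine h.congr (Filter.Eventually.of_forall fun x => ?_)
    simp only [hf₁, hf₂]
    rw [inner_add_left, real_inner_smul_left, real_inner_smul_left]
    congr 1
    ring
  -- elementary bounds
  have habs : ∀ r : ℝ, |r| ≤ exp r + exp (-r) := by
    intro r
    rcases abs_cases r with ⟨h1, h2⟩ | ⟨h1, h2⟩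
    · nlinarith [Real.add_one_le_exp r, (Real.exp_pos (-r)).le]
    · nlinarith [Real.add_one_le_exp (-r), (Real.exp_pos r).le]
  have habs' : ∀ r : ℝ, |r| ≤ exp |r| := by
    intro r; nlinarith [Real.add_one_le_exp |r|]
  have hexpabs : ∀ r : ℝ, exp |r| ≤ exp r + exp (-r) := by
    intro r
    rcases abs_cases r with ⟨h1, _⟩ | ⟨h1, _⟩ <;> rw [h1] <;>
      nlinarith [(Real.exp_pos (-r)).le, (Real.exp_pos r).le]
  -- integrability of f₁ against exponentials of f₂
  have intMulExp : ∀ q : ℝ, Integrable (fun x => f₁ x * exp (q * f₂ x)) μ := by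
    intro q
    have hbnd := (Eint 1 q).add (Eint (-1) q)
    refine hbnd.mono ((hf₁c.mul ((continuous_const.mul hf₂c).rexp)).aestronglyMeasurable)
      (Filter.Eventually.of_forall fun x => ?_)
    have h1 : |f₁ x| ≤ exp (f₁ x) + exp (-f₁ x) := habs (f₁ x)
    have hrhs : (0:ℝ) ≤ exp (1 * f₁ x + q * f₂ x) + exp ((-1) * f₁ x + q * f₂ x) := by positivity
    simp only [Pi.add_apply]
    rw [Real.norm_eq_abs, Real.norm_eq_abs, abs_of_nonneg hrhs, abs_mul, abs_exp]
    calc |f₁ x| * exp (q * f₂ x) ≤ (exp (f₁ x) + exp (-f₁ x)) * exp (q * f₂ x) :=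
          mul_le_mul_of_nonneg_right h1 (exp_nonneg _)
      _ = exp (1 * f₁ x + q * f₂ x) + exp ((-1) * f₁ x + q * f₂ x) := by
          rw [add_mul, ← exp_add, ← exp_add]; ring_nf
  have intExp : ∀ q : ℝ, Integrable (fun x => exp (q * f₂ x)) μ := by
    intro q
    refine (Eint 0 q).congr (Filter.Eventually.of_forall fun x => ?_)
    simp only [zero_mul, zero_add]
  -- translated mass identity
  have hmassu : ∀ u : ℝ, ∫ x, exp (-(ρ * (u * f₂ x))) ∂μ = exp (ρ * (u ^ 2 * (B / 2))) := by
    intro u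
    have htr := integral_add_right_eq_self (μ := (volume : Measure (EuclideanSpace ℝ (Fin d))))
      (fun x => exp (-V x)) (u • a₂)
    rw [gibbs_mass_real hVc] at htr
    have hpt : ∀ x : EuclideanSpace ℝ (Fin d), exp (-V (x + u • a₂))
        = exp (-V x) * exp (-(ρ * (u * f₂ x))) * exp (-(ρ * (u ^ 2 * (B / 2)))) := by
      intro x
      rw [line₂ x u, ← exp_add, ← exp_add]
      congr 1
      ring
    simp only [hpt] at htr
    rw [integral_mul_const, ← gibbs_integral hVc, ← hμ] at htr
    have h3 := congrArg (fun z : ℝ => z * exp (ρ * (u ^ 2 * (B / 2)))) htr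
    simp only [one_mul] at h3
    rwa [mul_assoc, ← exp_add, neg_add_cancel, exp_zero, mul_one] at h3
  -- translated first-moment identity
  set c₁ : ℝ := ∫ x, f₁ x ∂μ with hc₁def
  have hFu : ∀ u : ℝ, ∫ x, (f₁ x + u * γ) * exp (-(ρ * (u * f₂ x))) ∂μ
      = c₁ * exp (ρ * (u ^ 2 * (B / 2))) := by
    intro u
    have htr := integral_add_right_eq_self (μ := (volume : Measure (EuclideanSpace ℝ (Fin d))))
      (fun x => exp (-V x) * f₁ x) (u • a₂)
    have hpt : ∀ x, exp (-V (x + u • a₂)) * f₁ (x + u • a₂)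
        = exp (-V x) * ((f₁ x + u * γ) * exp (-(ρ * (u * f₂ x)))) * exp (-(ρ * (u ^ 2 * (B / 2)))) := by
      intro x
      have hf : f₁ (x + u • a₂) = f₁ x + u * γ := by
        simp only [hf₁, hγ]
        rw [inner_add_right, real_inner_smul_right]
        ring
      rw [hf, line₂ x u,
        show -(V x + ρ * (u * f₂ x) + ρ * (u ^ 2 * (B / 2)))
          = -V x + -(ρ * (u * f₂ x)) + -(ρ * (u ^ 2 * (B / 2))) from by ring,
        exp_add, exp_add]
      ring
    simp only [hpt] at htr
    rw [integral_mul_const, ← gibbs_integral hVc, ← gibbs_integral hVc, ← hμ] at htr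
    have h3 := congrArg (fun z : ℝ => z * exp (ρ * (u ^ 2 * (B / 2)))) htr
    rwa [mul_assoc, ← exp_add, neg_add_cancel, exp_zero, mul_one] at h3
  -- the function A and its identity
  have hAid : ∀ u : ℝ, ∫ x, f₁ x * exp (-(ρ * (u * f₂ x))) ∂μ
      = c₁ * exp (ρ * (u ^ 2 * (B / 2))) - u * γ * exp (ρ * (u ^ 2 * (B / 2))) := by
    intro u
    have hint1 : Integrable (fun x => f₁ x * exp (-(ρ * (u * f₂ x)))) μ := by
      refine (intMulExp (-(ρ * u))).congr (Filter.Eventually.of_forall fun x => ?_)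
      show f₁ x * exp (-(ρ * u) * f₂ x) = f₁ x * exp (-(ρ * (u * f₂ x)))
      rw [show -(ρ * u) * f₂ x = -(ρ * (u * f₂ x)) from by ring]
    have hint2 : Integrable (fun x => u * γ * exp (-(ρ * (u * f₂ x)))) μ := by
      refine ((intExp (-(ρ * u))).const_mul (u * γ)).congr (Filter.Eventually.of_forall fun x => ?_)
      show u * γ * exp (-(ρ * u) * f₂ x) = u * γ * exp (-(ρ * (u * f₂ x)))
      rw [show -(ρ * u) * f₂ x = -(ρ * (u * f₂ x)) from by ring]
    have hadd := integral_add hint1 hint2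
    have hsum : ∫ x, (f₁ x + u * γ) * exp (-(ρ * (u * f₂ x))) ∂μ
        = (∫ x, f₁ x * exp (-(ρ * (u * f₂ x))) ∂μ)
          + ∫ x, u * γ * exp (-(ρ * (u * f₂ x))) ∂μ := by
      rw [← hadd]
      congr 1; funext x; ring
    have hconst : ∫ x, u * γ * exp (-(ρ * (u * f₂ x))) ∂μ
        = u * γ * exp (ρ * (u ^ 2 * (B / 2))) := by
      rw [show (fun x => u * γ * exp (-(ρ * (u * f₂ x))))
        = (fun x => (u * γ) * exp (-(ρ * (u * f₂ x)))) from rfl]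
      rw [integral_const_mul, hmassu u]
    have hF := hFu u
    rw [hsum, hconst] at hF
    linarith
  -- differentiation under the integral at 0
  have hball : (0:ℝ) < ρ⁻¹ := inv_pos.mpr hρ
  set F' : ℝ → EuclideanSpace ℝ (Fin d) → ℝ :=
    fun u x => f₁ x * (exp (u * (-(ρ * f₂ x))) * (-(ρ * f₂ x))) with hF'
  have hshape : ∀ x : EuclideanSpace ℝ (Fin d),
      (fun u : ℝ => f₁ x * exp (-(ρ * (u * f₂ x))))
        = fun u : ℝ => f₁ x * exp (u * (-(ρ * f₂ x))) := by
    intro x; funext v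
    rw [show -(ρ * (v * f₂ x)) = v * (-(ρ * f₂ x)) from by ring]
  have hmeas : ∀ᶠ u in nhds (0:ℝ),
      AEStronglyMeasurable (fun x => f₁ x * exp (-(ρ * (u * f₂ x)))) μ := by
    refine Filter.Eventually.of_forall fun u => ?_
    exact (hf₁c.mul
      (((continuous_const.mul (continuous_const.mul hf₂c)).neg).rexp)).aestronglyMeasurable
  have hint0 : Integrable (fun x => f₁ x * exp (-(ρ * ((0:ℝ) * f₂ x)))) μ := by
    refine (intMulExp 0).congr (Filter.Eventually.of_forall fun x => ?_)
    show f₁ x * exp (0 * f₂ x) = f₁ x * exp (-(ρ * (0 * f₂ x)))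
    norm_num
  have hF'meas : AEStronglyMeasurable (F' 0) μ := by
    refine Continuous.aestronglyMeasurable ?_
    exact hf₁c.mul
      ((((continuous_const.mul ((continuous_const.mul hf₂c).neg)).rexp)).mul
        ((continuous_const.mul hf₂c).neg))
  have hbound : ∀ᵐ x ∂μ, ∀ u ∈ Metric.ball (0:ℝ) ρ⁻¹, ‖F' u x‖
      ≤ ρ * ((exp (f₁ x) + exp (-f₁ x)) * (exp (2 * f₂ x) + exp (-(2 * f₂ x)))) := by
    refine Filter.Eventually.of_forall fun x => fun u hu => ?_
    have hu' : |u| ≤ ρ⁻¹ := by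
      have := Metric.mem_ball.mp hu
      rw [Real.dist_eq, sub_zero] at this
      exact this.le
    have ht : u * (-(ρ * f₂ x)) ≤ |f₂ x| := by
      calc u * (-(ρ * f₂ x)) ≤ |u * (-(ρ * f₂ x))| := le_abs_self _
        _ = |u| * (ρ * |f₂ x|) := by
            rw [abs_mul, abs_neg, abs_mul, abs_of_pos hρ]
        _ ≤ ρ⁻¹ * (ρ * |f₂ x|) := by
            exact mul_le_mul_of_nonneg_right hu' (by positivity)
        _ = |f₂ x| := by field_simp
    have k1 : |f₁ x| ≤ exp (f₁ x) + exp (-f₁ x) := habs _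
    have k2 : exp (u * (-(ρ * f₂ x))) * |f₂ x| ≤ exp (2 * f₂ x) + exp (-(2 * f₂ x)) := by
      calc exp (u * (-(ρ * f₂ x))) * |f₂ x| ≤ exp |f₂ x| * exp |f₂ x| :=
            mul_le_mul (exp_le_exp.2 ht) (habs' _) (abs_nonneg _) (exp_nonneg _)
        _ = exp |2 * f₂ x| := by
            rw [← exp_add]; congr 1; rw [abs_mul, abs_two]; ring
        _ ≤ exp (2 * f₂ x) + exp (-(2 * f₂ x)) := hexpabs _
    have hn : ‖F' u x‖ = |f₁ x| * (exp (u * (-(ρ * f₂ x))) * (ρ * |f₂ x|)) := by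
      simp only [hF']
      rw [Real.norm_eq_abs, abs_mul, abs_mul, abs_exp, abs_neg, abs_mul, abs_of_pos hρ]
    rw [hn, show |f₁ x| * (exp (u * (-(ρ * f₂ x))) * (ρ * |f₂ x|))
      = ρ * (|f₁ x| * (exp (u * (-(ρ * f₂ x))) * |f₂ x|)) from by ring]
    refine mul_le_mul_of_nonneg_left ?_ hρ.le
    exact mul_le_mul k1 k2 (by positivity) (by positivity)
  have hbint : Integrable
      (fun x => ρ * ((exp (f₁ x) + exp (-f₁ x)) * (exp (2 * f₂ x) + exp (-(2 * f₂ x))))) μ := by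
    have h := (((Eint 1 2).add (Eint 1 (-2))).add ((Eint (-1) 2).add (Eint (-1) (-2)))).const_mul ρ
    refine h.congr (Filter.Eventually.of_forall fun x => ?_)
    simp only [Pi.add_apply, exp_add, one_mul, neg_one_mul, neg_mul]
    ring
  have hdiff : ∀ᵐ x ∂μ, ∀ u ∈ Metric.ball (0:ℝ) ρ⁻¹,
      HasDerivAt (fun u : ℝ => f₁ x * exp (-(ρ * (u * f₂ x)))) (F' u x) u := by
    refine Filter.Eventually.of_forall fun x => fun u _ => ?_
    rw [hshape x]
    exact ((hasDerivAt_mul_const (-(ρ * f₂ x))).exp).const_mul (f₁ x)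
  obtain ⟨-, hder⟩ := hasDerivAt_integral_of_dominated_loc_of_deriv_le (Metric.ball_mem_nhds 0 hball)
    hmeas hint0 hF'meas hbound hbint hdiff
  have hAfun : (fun u : ℝ => ∫ x, f₁ x * exp (-(ρ * (u * f₂ x))) ∂μ)
      = fun u : ℝ => c₁ * exp (ρ * (u ^ 2 * (B / 2))) - u * γ * exp (ρ * (u ^ 2 * (B / 2))) :=
    funext hAid
  rw [hAfun] at hder
  have hE0 : HasDerivAt (fun u : ℝ => exp (ρ * (u ^ 2 * (B / 2)))) 0 0 := by
    have h := ((((hasDerivAt_pow 2 (0:ℝ)).mul_const (B / 2)).const_mul ρ).exp)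
    simpa using h
  have hd2a : HasDerivAt (fun u : ℝ => c₁ * exp (ρ * (u ^ 2 * (B / 2)))) 0 0 := by
    simpa using hE0.const_mul c₁
  have hd2b : HasDerivAt (fun u : ℝ => u * γ * exp (ρ * (u ^ 2 * (B / 2)))) γ 0 := by
    have h := (hasDerivAt_mul_const γ).mul hE0
    exact h.congr_deriv (by simp)
  have huniq := hder.unique (hd2a.sub hd2b)
  have hzero : ∫ x, F' 0 x ∂μ = 0 := by
    have hptw : (fun x => F' 0 x) = fun x => (-ρ) * (f₁ x * f₂ x) := by
      funext x
      simp only [hF', zero_mul, exp_zero, one_mul]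
      ring
    rw [hptw, integral_const_mul]
    have h0 : ∫ x, f₁ x * f₂ x ∂μ = 0 := by
      simp only [hf₁, hf₂]
      exact horth
    rw [h0, mul_zero]
  rw [hzero] at huniq
  have hγ0 : γ = 0 := by linarith
  linarith
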